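/- arXiv:1406.1579 — 4 statements merged into one kernel-verified Lean document; each statement's English description precedes it below -/
import Mathlib

section
/- Let 𝕄, 𝕄_T, 𝕄_H be structured sparsity models on {1,…,n}, let 0 ≤ δ < 1 and 0 < c_H ≤ 1 be reals, and set α₀ := c_H(1−δ) − δ and β₀ := (1+c_H)√(1+δ). Suppose A ∈ ℝ^{m×n} has the (δ, 𝕄 ⊕ 𝕄_T ⊕ 𝕄_H)-model-RIP. Let x, xⁱ ∈ ℝⁿ with supp(x) ∈ 𝕄⁺ and supp(xⁱ) ∈ 𝕄_T⁺, let e ∈ ℝᵐ, set r = x − xⁱ and b = Aᵀ(Ar + e). Let Γ ∈ 𝕄_H⁺ satisfy ‖b_Γ‖₂ ≥ c_H‖b_Ω‖₂ for every Ω ∈ 𝕄_T ⊕ 𝕄. Then ‖r_Γ‖₂ ≥ α₀‖r‖₂ − β₀‖e‖₂. -/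
/-- The ℓ₂ norm of a vector in ℝⁿ. -/
noncomputable def l2norm {k : ℕ} (x : Fin k → ℝ) : ℝ := Real.sqrt (∑ i, (x i) ^ 2)

/-- Restriction of a vector to a set of coordinates: agrees with `x` on `Ω`, zero elsewhere. -/
noncomputable def restr {k : ℕ} (x : Fin k → ℝ) (Ω : Set (Fin k)) : Fin k → ℝ := Ω.indicator x

/-- The closure of a structured sparsity model under taking subsets. -/
def modelPlus {k : ℕ} (M : Set (Set (Fin k))) : Set (Set (Fin k)) :=
  {Ω | ∃ S ∈ M, Ω ⊆ S}

/-- The sum of two structured sparsity models. -/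
def modelSum {k : ℕ} (M₁ M₂ : Set (Set (Fin k))) : Set (Set (Fin k)) :=
  {Ω | ∃ S₁ ∈ M₁, ∃ S₂ ∈ M₂, Ω = S₁ ∪ S₂}

/-- A matrix `A` has the `(δ, M)`-model-RIP. -/
def hasModelRIP {m n : ℕ} (A : Matrix (Fin m) (Fin n) ℝ) (δ : ℝ)
    (M : Set (Set (Fin n))) : Prop :=
  ∀ x : Fin n → ℝ, Function.support x ∈ modelPlus M →
    (1 - δ) * (l2norm x) ^ 2 ≤ (l2norm (A.mulVec x)) ^ 2 ∧
    (l2norm (A.mulVec x)) ^ 2 ≤ (1 + δ) * (l2norm x) ^ 2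

/-!
Put `b = Aᵀ(Ar + e)`. Testing `b` against `r` gives `‖b_Ω‖ ≥ (1 - δ)‖r‖ - √(1 + δ)‖e‖` for any
`Ω ⊇ supp r`, in particular for `Ω = supp x ∪ supp xⁱ`. Testing `b` against `b_Γ` and using the RIP
form of near-orthogonality, `⟨Au, Av⟩ ≤ ⟨u, v⟩ + δ‖u‖‖v‖` for `u, v` supported in a common model
set, gives `‖b_Γ‖ ≤ ‖r_Γ‖ + δ‖r‖ + √(1 + δ)‖e‖`. The head condition `‖b_Γ‖ ≥ c_H ‖b_Ω‖` chains the
two bounds.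
-/

open Matrix

section L2Norm

variable {k : ℕ}

lemma l2norm_nonneg (x : Fin k → ℝ) : 0 ≤ l2norm x := Real.sqrt_nonneg _

lemma sq_l2norm (x : Fin k → ℝ) : l2norm x ^ 2 = x ⬝ᵥ x := by
  rw [l2norm, Real.sq_sqrt (Finset.sum_nonneg fun i _ => sq_nonneg _)]
  simp only [dotProduct, sq]

@[simp]
lemma l2norm_zero : l2norm (0 : Fin k → ℝ) = 0 := by
  simp [l2norm]

lemma eq_zero_of_l2norm_eq_zero {x : Fin k → ℝ} (hx : l2norm x = 0) : x = 0 := by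
  rw [← dotProduct_self_eq_zero, ← sq_l2norm, hx, sq, zero_mul]

lemma abs_dotProduct_le_l2norm_mul (x y : Fin k → ℝ) : |x ⬝ᵥ y| ≤ l2norm x * l2norm y := by
  rw [l2norm, l2norm, ← Real.sqrt_mul (Finset.sum_nonneg fun i _ => sq_nonneg _)]
  exact Real.abs_le_sqrt (Finset.sum_mul_sq_le_sq_mul_sq _ _ _)

lemma l2norm_smul (c : ℝ) (x : Fin k → ℝ) : l2norm (c • x) = |c| * l2norm x := by
  simp only [l2norm, Pi.smul_apply, smul_eq_mul, mul_pow, ← Finset.mul_sum]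
  rw [Real.sqrt_mul (sq_nonneg c), Real.sqrt_sq_eq_abs]

lemma restr_dotProduct_of_support_subset (x y : Fin k → ℝ) {Ω : Set (Fin k)}
    (hy : Function.support y ⊆ Ω) : restr x Ω ⬝ᵥ y = x ⬝ᵥ y := by
  refine Finset.sum_congr rfl fun i _ => ?_
  by_cases hyi : y i = 0
  · simp [hyi]
  · rw [restr, Set.indicator_of_mem (hy hyi)]

lemma modelPlus_of_subset {M : Set (Set (Fin k))} {B C : Set (Fin k)} (h : C ⊆ B)
    (hB : B ∈ modelPlus M) : C ∈ modelPlus M := by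
  obtain ⟨S, hS, hBS⟩ := hB
  exact ⟨S, hS, h.trans hBS⟩

end L2Norm

namespace hasModelRIP

variable {m n : ℕ} {A : Matrix (Fin m) (Fin n) ℝ} {δ : ℝ} {M : Set (Set (Fin n))}
  {B : Set (Fin n)}

lemma l2norm_mulVec_le (hA : hasModelRIP A δ M) {x : Fin n → ℝ}
    (hx : Function.support x ∈ modelPlus M) : l2norm (A *ᵥ x) ≤ √(1 + δ) * l2norm x := by
  rw [← Real.sqrt_sq (l2norm_nonneg (A *ᵥ x)), ← Real.sqrt_sq (l2norm_nonneg x),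
    ← Real.sqrt_mul' _ (sq_nonneg _)]
  exact Real.sqrt_le_sqrt (hA x hx).2

/-- Polarization: `4⟨Au, Av⟩ = ‖A(u + v)‖² - ‖A(u - v)‖²`. -/
lemma mulVec_dotProduct_mulVec_le_add_half (hA : hasModelRIP A δ M) (hB : B ∈ modelPlus M)
    {u v : Fin n → ℝ} (hu : Function.support u ⊆ B) (hv : Function.support v ⊆ B) :
    (A *ᵥ u) ⬝ᵥ (A *ᵥ v) ≤ u ⬝ᵥ v + δ * (l2norm u ^ 2 + l2norm v ^ 2) / 2 := by
  have hsum := (hA (u + v) (modelPlus_of_subset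
    ((Function.support_add u v).trans (Set.union_subset hu hv)) hB)).2
  have hdiff := (hA (u - v) (modelPlus_of_subset
    ((Function.support_sub u v).trans (Set.union_subset hu hv)) hB)).1
  simp only [sq_l2norm, mulVec_add, mulVec_sub, add_dotProduct, dotProduct_add, sub_dotProduct,
    dotProduct_sub, dotProduct_comm v u, dotProduct_comm (A *ᵥ v) (A *ᵥ u)] at hsum hdiff ⊢
  linarith

lemma mulVec_dotProduct_mulVec_le (hA : hasModelRIP A δ M) (hB : B ∈ modelPlus M)
    {u v : Fin n → ℝ} (hu : Function.support u ⊆ B) (hv : Function.support v ⊆ B) :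
    (A *ᵥ u) ⬝ᵥ (A *ᵥ v) ≤ u ⬝ᵥ v + δ * l2norm u * l2norm v := by
  rcases (l2norm_nonneg u).eq_or_lt with hu0 | hu0
  · simp [eq_zero_of_l2norm_eq_zero hu0.symm]
  rcases (l2norm_nonneg v).eq_or_lt with hv0 | hv0
  · simp [eq_zero_of_l2norm_eq_zero hv0.symm]
  -- rescale so that both vectors have norm `‖u‖‖v‖`, where the two bounds coincide
  have h := mulVec_dotProduct_mulVec_le_add_half hA hB (u := l2norm v • u) (v := l2norm u • v)
    ((Function.support_const_smul_subset _ _).trans hu)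
    ((Function.support_const_smul_subset _ _).trans hv)
  simp only [l2norm_smul, abs_of_pos hu0, abs_of_pos hv0, mulVec_smul, smul_dotProduct,
    dotProduct_smul, smul_eq_mul] at h
  have hpos : 0 < l2norm v * l2norm u := mul_pos hv0 hu0
  nlinarith

end hasModelRIP

section Backprojection

variable {m n : ℕ} {A : Matrix (Fin m) (Fin n) ℝ} {δ : ℝ} {M : Set (Set (Fin n))}

lemma transpose_mulVec_dotProduct (A : Matrix (Fin m) (Fin n) ℝ) (y : Fin m → ℝ)
    (w : Fin n → ℝ) : (Aᵀ *ᵥ y) ⬝ᵥ w = y ⬝ᵥ (A *ᵥ w) := by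
  rw [mulVec_transpose, dotProduct_mulVec]

lemma sub_le_l2norm_restr_transpose_mulVec (hA : hasModelRIP A δ M) {r : Fin n → ℝ}
    (hr : Function.support r ∈ modelPlus M) (e : Fin m → ℝ) {Ω : Set (Fin n)}
    (hΩ : Function.support r ⊆ Ω) :
    (1 - δ) * l2norm r - √(1 + δ) * l2norm e ≤ l2norm (restr (Aᵀ *ᵥ (A *ᵥ r + e)) Ω) := by
  have key : (1 - δ) * l2norm r ^ 2 - √(1 + δ) * l2norm e * l2norm r ≤
      l2norm (restr (Aᵀ *ᵥ (A *ᵥ r + e)) Ω) * l2norm r := by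
    calc (1 - δ) * l2norm r ^ 2 - √(1 + δ) * l2norm e * l2norm r
        ≤ (A *ᵥ r) ⬝ᵥ (A *ᵥ r) + e ⬝ᵥ (A *ᵥ r) := by
          rw [← sq_l2norm]
          linarith [(hA r hr).1, neg_abs_le (e ⬝ᵥ A *ᵥ r), abs_dotProduct_le_l2norm_mul e (A *ᵥ r),
            mul_le_mul_of_nonneg_left (hA.l2norm_mulVec_le hr) (l2norm_nonneg e)]
      _ = restr (Aᵀ *ᵥ (A *ᵥ r + e)) Ω ⬝ᵥ r := by
          rw [restr_dotProduct_of_support_subset _ _ hΩ, transpose_mulVec_dotProduct,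
            add_dotProduct]
      _ ≤ l2norm (restr (Aᵀ *ᵥ (A *ᵥ r + e)) Ω) * l2norm r :=
          (le_abs_self _).trans (abs_dotProduct_le_l2norm_mul _ _)
  rcases (l2norm_nonneg r).eq_or_lt with hr0 | hr0
  · rw [← hr0]
    linarith [l2norm_nonneg (restr (Aᵀ *ᵥ (A *ᵥ r + e)) Ω),
      mul_nonneg (Real.sqrt_nonneg (1 + δ)) (l2norm_nonneg e)]
  · nlinarith

lemma l2norm_restr_transpose_mulVec_le (hA : hasModelRIP A δ M) (hδ : 0 ≤ δ)
    {B Γ : Set (Fin n)} (hB : B ∈ modelPlus M) {r : Fin n → ℝ}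
    (hr : Function.support r ⊆ B) (hΓ : Γ ⊆ B) (e : Fin m → ℝ) :
    l2norm (restr (Aᵀ *ᵥ (A *ᵥ r + e)) Γ) ≤
      l2norm (restr r Γ) + δ * l2norm r + √(1 + δ) * l2norm e := by
  set w := restr (Aᵀ *ᵥ (A *ᵥ r + e)) Γ
  have hwΓ : Function.support w ⊆ Γ := Set.support_indicator_subset
  have hAw := hA.l2norm_mulVec_le (modelPlus_of_subset (hwΓ.trans hΓ) hB)
  have key : l2norm w ^ 2 ≤
      (l2norm (restr r Γ) + δ * l2norm r + √(1 + δ) * l2norm e) * l2norm w := by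
    calc l2norm w ^ 2 = (A *ᵥ r) ⬝ᵥ (A *ᵥ w) + e ⬝ᵥ (A *ᵥ w) := by
          rw [sq_l2norm, restr_dotProduct_of_support_subset _ _ hwΓ,
            transpose_mulVec_dotProduct, add_dotProduct]
      _ ≤ (restr r Γ ⬝ᵥ w + δ * l2norm r * l2norm w) + l2norm e * l2norm (A *ᵥ w) := by
          rw [restr_dotProduct_of_support_subset _ _ hwΓ]
          exact add_le_add (hA.mulVec_dotProduct_mulVec_le hB hr (hwΓ.trans hΓ))
            ((le_abs_self _).trans (abs_dotProduct_le_l2norm_mul _ _))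
      _ ≤ _ := by
          nlinarith [(le_abs_self _).trans (abs_dotProduct_le_l2norm_mul (restr r Γ) w),
            mul_le_mul_of_nonneg_left hAw (l2norm_nonneg e)]
  have hbound : 0 ≤ l2norm (restr r Γ) + δ * l2norm r + √(1 + δ) * l2norm e := by
    have := mul_nonneg hδ (l2norm_nonneg r)
    have := mul_nonneg (Real.sqrt_nonneg (1 + δ)) (l2norm_nonneg e)
    linarith [l2norm_nonneg (restr r Γ)]
  nlinarith [l2norm_nonneg w]

end Backprojection

theorem stmt1_general {n m : ℕ}
    (M MT MH : Set (Set (Fin n)))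
    (δ cH : ℝ) (hδ0 : 0 ≤ δ) (hcH0 : 0 < cH)
    (α₀ β₀ : ℝ) (hα₀ : α₀ = cH * (1 - δ) - δ)
    (hβ₀ : β₀ = (1 + cH) * Real.sqrt (1 + δ))
    (A : Matrix (Fin m) (Fin n) ℝ)
    (hA : hasModelRIP A δ (modelSum (modelSum M MT) MH))
    (x xi : Fin n → ℝ)
    (hx : Function.support x ∈ modelPlus M)
    (hxi : Function.support xi ∈ modelPlus MT)
    (e : Fin m → ℝ)
    (r : Fin n → ℝ) (hr : r = x - xi)
    (b : Fin n → ℝ) (hb : b = A.transpose.mulVec (A.mulVec r + e))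
    (Γ : Set (Fin n)) (hΓ : Γ ∈ modelPlus MH)
    (hhead : ∀ Ω ∈ modelSum MT M, l2norm (restr b Γ) ≥ cH * l2norm (restr b Ω)) :
    l2norm (restr r Γ) ≥ α₀ * l2norm r - β₀ * l2norm e := by
  obtain ⟨S, hS, hxS⟩ := hx
  obtain ⟨ST, hST, hxiST⟩ := hxi
  obtain ⟨SH, hSH, hΓSH⟩ := hΓ
  have hB : S ∪ ST ∪ SH ∈ modelPlus (modelSum (modelSum M MT) MH) :=
    ⟨_, ⟨S ∪ ST, ⟨S, hS, ST, hST, rfl⟩, SH, hSH, rfl⟩, subset_rfl⟩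
  have hrΩ : Function.support r ⊆ ST ∪ S := by
    rw [hr, Set.union_comm]
    exact (Function.support_sub x xi).trans (Set.union_subset_union hxS hxiST)
  have hrB : Function.support r ⊆ S ∪ ST ∪ SH :=
    hrΩ.trans ((Set.union_comm ST S).le.trans Set.subset_union_left)
  have hlow := sub_le_l2norm_restr_transpose_mulVec hA (modelPlus_of_subset hrB hB) e hrΩ
  have hup := l2norm_restr_transpose_mulVec_le hA hδ0 hB hrB
    (hΓSH.trans Set.subset_union_right) e
  have hhd := hhead (ST ∪ S) ⟨ST, hST, S, hS, rfl⟩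
  subst hb hα₀ hβ₀
  linarith [mul_le_mul_of_nonneg_left hlow hcH0.le]

theorem stmt1 {n m : ℕ}
    (M MT MH : Set (Set (Fin n)))
    (δ cH : ℝ) (hδ0 : 0 ≤ δ) (hδ1 : δ < 1) (hcH0 : 0 < cH) (hcH1 : cH ≤ 1)
    (α₀ β₀ : ℝ) (hα₀ : α₀ = cH * (1 - δ) - δ)
    (hβ₀ : β₀ = (1 + cH) * Real.sqrt (1 + δ))
    (A : Matrix (Fin m) (Fin n) ℝ)
    (hA : hasModelRIP A δ (modelSum (modelSum M MT) MH))
    (x xi : Fin n → ℝ)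
    (hx : Function.support x ∈ modelPlus M)
    (hxi : Function.support xi ∈ modelPlus MT)
    (e : Fin m → ℝ)
    (r : Fin n → ℝ) (hr : r = x - xi)
    (b : Fin n → ℝ) (hb : b = A.transpose.mulVec (A.mulVec r + e))
    (Γ : Set (Fin n)) (hΓ : Γ ∈ modelPlus MH)
    (hhead : ∀ Ω ∈ modelSum MT M, l2norm (restr b Γ) ≥ cH * l2norm (restr b Ω)) :
    l2norm (restr r Γ) ≥ α₀ * l2norm r - β₀ * l2norm e :=
  stmt1_general M MT MH δ cH hδ0 hcH0 α₀ β₀ hα₀ hβ₀ A hA x xi hx hxi e r hr b hb Γ hΓ hhead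
end

section
/- Let 𝕄, 𝕄_T, 𝕄_H be structured sparsity models on {1,…,n}, let 0 < c_H ≤ 1, c_T ≥ 1, ρ₀ ≥ 0, τ₀ ≥ 0 be reals, let A ∈ ℝ^{m×n}, and let med : ℝᵐ → ℝⁿ be a map satisfying: for all x' ∈ ℝⁿ, e' ∈ ℝᵐ, and S ∈ (𝕄 ⊕ 𝕄_T ⊕ 𝕄_H)⁺, ‖(x' − med(A x'_S + e'))_S‖₁ ≤ ρ₀‖x'_S‖₁ + τ₀‖e'‖₁. Let x, xⁱ ∈ ℝⁿ with supp(x) ∈ 𝕄⁺ and supp(xⁱ) ∈ 𝕄_T⁺, let e ∈ ℝᵐ, set r = x − xⁱ and v = med(Ar + e). Let Γ ∈ 𝕄_H⁺ satisfy ‖v_Γ‖₁ ≥ c_H‖v_Ω‖₁ for every Ω ∈ 𝕄_T ⊕ 𝕄, set a = xⁱ + v_Γ, and let Ω' ∈ 𝕄_T⁺ satisfy ‖a − a_{Ω'}‖₁ ≤ c_T‖a − a_Ω‖₁ for every Ω ∈ 𝕄; set x^{i+1} = a_{Ω'}. Then ‖x − x^{i+1}‖₁ ≤ ρ‖x − xⁱ‖₁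 + τ‖e‖₁, where ρ = (1+c_T)(2ρ₀ + 1 − c_H(1−ρ₀)) and τ = (1+c_T)(2+c_H)τ₀. -/
/-!
Write `r = x - xⁱ` and `E = ρ₀‖r‖₁ + τ₀‖e‖₁`. Both `supp r ⊆ Ω ∈ 𝕄_T ⊕ 𝕄` and `Γ` lie in one set
`S ∈ (𝕄 ⊕ 𝕄_T ⊕ 𝕄_H)⁺`, so the median estimate bounds `‖(r - v)_Ω‖₁` and `‖(r - v)_Γ‖₁` by `E`.
Then `‖v_Ω‖₁ ≥ ‖r‖₁ - E`, the head guarantee gives `‖r_Γ‖₁ ≥ ‖v_Γ‖₁ - E ≥ c_H(‖r‖₁ - E) - E`, and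
`x - a = r - v_Γ = (r - v)_Γ + (r - r_Γ)` has norm at most `(1 - c_H)‖r‖₁ + (2 + c_H)E`.
Finally, since `x` is supported in a set of `𝕄`, the tail guarantee gives
`‖x - a_{Ω'}‖₁ ≤ ‖x - a‖₁ + c_T‖a - x‖₁`.
-/

/-- The ℓ₁ norm of a vector in ℝⁿ. -/
noncomputable def l1norm {k : ℕ} (x : Fin k → ℝ) : ℝ := ∑ i, |x i|

open Function Set

section

variable {k : ℕ}

lemma l1norm_le_l1norm {x y : Fin k → ℝ} (h : ∀ i, |x i| ≤ |y i|) : l1norm x ≤ l1norm y :=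
  Finset.sum_le_sum fun i _ => h i

lemma l1norm_add_le (x y : Fin k → ℝ) : l1norm (x + y) ≤ l1norm x + l1norm y := by
  simp only [l1norm, Pi.add_apply, ← Finset.sum_add_distrib]
  exact Finset.sum_le_sum fun i _ => abs_add_le _ _

lemma l1norm_sub_comm (x y : Fin k → ℝ) : l1norm (x - y) = l1norm (y - x) := by
  simp only [l1norm, Pi.sub_apply, abs_sub_comm]

lemma l1norm_sub_le_add (x y : Fin k → ℝ) : l1norm (x - y) ≤ l1norm x + l1norm y := by
  simpa [l1norm, sub_eq_add_neg] using l1norm_add_le x (-y)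

lemma restr_sub (x y : Fin k → ℝ) (Ω : Set (Fin k)) :
    restr (x - y) Ω = restr x Ω - restr y Ω :=
  indicator_sub Ω x y

lemma restr_eq_self_of_support_subset {x : Fin k → ℝ} {S : Set (Fin k)}
    (h : support x ⊆ S) : restr x S = x :=
  indicator_eq_self.mpr h

lemma l1norm_restr_mono (x : Fin k → ℝ) {Ω S : Set (Fin k)} (h : Ω ⊆ S) :
    l1norm (restr x Ω) ≤ l1norm (restr x S) :=
  l1norm_le_l1norm fun i => by
    by_cases hi : i ∈ Ω
    · simp [restr, hi, h hi]
    · simp [restr, hi]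

lemma l1norm_restr_add_l1norm_sub_restr (x : Fin k → ℝ) (Ω : Set (Fin k)) :
    l1norm (restr x Ω) + l1norm (x - restr x Ω) = l1norm x := by
  simp only [l1norm, Pi.sub_apply, ← Finset.sum_add_distrib]
  refine Finset.sum_congr rfl fun i _ => ?_
  by_cases hi : i ∈ Ω <;> simp [restr, hi]

lemma l1norm_sub_restr_le_of_support_subset (a : Fin k → ℝ) {y : Fin k → ℝ} {S : Set (Fin k)}
    (hy : support y ⊆ S) : l1norm (a - restr a S) ≤ l1norm (a - y) :=
  l1norm_le_l1norm fun i => by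
    by_cases hi : i ∈ S
    · simp [restr, hi]
    · simp [restr, hi, notMem_support.mp (fun h => hi (hy h))]

lemma union_mem_modelSum {M₁ M₂ : Set (Set (Fin k))} {S₁ S₂ : Set (Fin k)}
    (h₁ : S₁ ∈ M₁) (h₂ : S₂ ∈ M₂) : S₁ ∪ S₂ ∈ modelSum M₁ M₂ :=
  ⟨S₁, h₁, S₂, h₂, rfl⟩

lemma mem_modelPlus_of_mem {M : Set (Set (Fin k))} {S : Set (Fin k)} (h : S ∈ M) :
    S ∈ modelPlus M :=
  ⟨S, h, subset_rfl⟩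

lemma l1norm_sub_restr_head_le {r v : Fin k → ℝ} {Γ Ω : Set (Fin k)} {cH E : ℝ}
    (hcH : 0 ≤ cH) (hr : support r ⊆ Ω)
    (hΓ : l1norm (restr (r - v) Γ) ≤ E) (hΩ : l1norm (restr (r - v) Ω) ≤ E)
    (hhead : cH * l1norm (restr v Ω) ≤ l1norm (restr v Γ)) :
    l1norm (r - restr v Γ) ≤ (1 - cH) * l1norm r + (2 + cH) * E := by
  have hvΩ : l1norm r - E ≤ l1norm (restr v Ω) := by
    have hdecomp : restr v Ω + restr (r - v) Ω = r := by
      rw [restr_sub, add_sub_cancel, restr_eq_self_of_support_subset hr]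
    have := l1norm_add_le (restr v Ω) (restr (r - v) Ω)
    rw [hdecomp] at this
    linarith
  have hrΓ : l1norm (restr v Γ) - E ≤ l1norm (restr r Γ) := by
    have hdecomp : restr r Γ - restr (r - v) Γ = restr v Γ := by
      rw [restr_sub, sub_sub_cancel]
    have := l1norm_sub_le_add (restr r Γ) (restr (r - v) Γ)
    rw [hdecomp] at this
    linarith
  have hsplit : r - restr v Γ = restr (r - v) Γ + (r - restr r Γ) := by
    rw [restr_sub]; abel
  calc l1norm (r - restr v Γ)
      ≤ l1norm (restr (r - v) Γ) + (l1norm r - l1norm (restr r Γ)) := by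
        rw [hsplit, ← l1norm_restr_add_l1norm_sub_restr r Γ, add_sub_cancel_left]
        exact l1norm_add_le _ _
    _ ≤ E + (l1norm r - (cH * (l1norm r - E) - E)) := by
        gcongr
        linarith [mul_le_mul_of_nonneg_left hvΩ hcH]
    _ = (1 - cH) * l1norm r + (2 + cH) * E := by ring

lemma l1norm_sub_restr_tail_le {x a : Fin k → ℝ} {S Ω' : Set (Fin k)} {cT : ℝ}
    (hcT : 0 ≤ cT) (hx : support x ⊆ S)
    (htail : l1norm (a - restr a Ω') ≤ cT * l1norm (a - restr a S)) :
    l1norm (x - restr a Ω') ≤ (1 + cT) * l1norm (x - a) := by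
  calc l1norm (x - restr a Ω')
      ≤ l1norm (x - a) + l1norm (a - restr a Ω') := by
        rw [← sub_add_sub_cancel x a]
        exact l1norm_add_le _ _
    _ ≤ l1norm (x - a) + cT * l1norm (a - x) := by
        gcongr
        exact htail.trans (mul_le_mul_of_nonneg_left
          (l1norm_sub_restr_le_of_support_subset a hx) hcT)
    _ = (1 + cT) * l1norm (x - a) := by rw [l1norm_sub_comm a x]; ring

end

theorem stmt5_general {n m : ℕ}
    (M MT MH : Set (Set (Fin n)))
    (cH cT ρ₀ τ₀ : ℝ) (hcH0 : 0 < cH) (hcT : 1 ≤ cT)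
    (A : Matrix (Fin m) (Fin n) ℝ)
    (med : (Fin m → ℝ) → (Fin n → ℝ))
    (hmed : ∀ (x' : Fin n → ℝ) (e' : Fin m → ℝ),
      ∀ S ∈ modelPlus (modelSum (modelSum M MT) MH),
        l1norm (restr (x' - med (A.mulVec (restr x' S) + e')) S) ≤
          ρ₀ * l1norm (restr x' S) + τ₀ * l1norm e')
    (x xi : Fin n → ℝ)
    (hx : Function.support x ∈ modelPlus M)
    (hxi : Function.support xi ∈ modelPlus MT)
    (e : Fin m → ℝ)
    (r : Fin n → ℝ) (hr : r = x - xi)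
    (v : Fin n → ℝ) (hv : v = med (A.mulVec r + e))
    (Γ : Set (Fin n)) (hΓ : Γ ∈ modelPlus MH)
    (hhead : ∀ Ω ∈ modelSum MT M, l1norm (restr v Γ) ≥ cH * l1norm (restr v Ω))
    (a : Fin n → ℝ) (ha : a = xi + restr v Γ)
    (Ω' : Set (Fin n))
    (htail : ∀ Ω ∈ M, l1norm (a - restr a Ω') ≤ cT * l1norm (a - restr a Ω))
    (xnext : Fin n → ℝ) (hxnext : xnext = restr a Ω')
    (ρ τ : ℝ)
    (hρ : ρ = (1 + cT) * (2 * ρ₀ + 1 - cH * (1 - ρ₀)))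
    (hτ : τ = (1 + cT) * (2 + cH) * τ₀) :
    l1norm (x - xnext) ≤ ρ * l1norm (x - xi) + τ * l1norm e := by
  obtain ⟨Sx, hSx, hxSx⟩ := hx
  obtain ⟨Sxi, hSxi, hxiSxi⟩ := hxi
  obtain ⟨SΓ, hSΓ, hΓSΓ⟩ := hΓ
  set S := Sx ∪ Sxi ∪ SΓ
  have hΩS : Sxi ∪ Sx ⊆ S := union_comm Sxi Sx ▸ subset_union_left
  have hrΩ : support r ⊆ Sxi ∪ Sx :=
    hr ▸ (support_sub x xi).trans (union_comm Sx Sxi ▸ union_subset_union hxSx hxiSxi)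
  have hmed_r := hmed r e S
    (mem_modelPlus_of_mem (union_mem_modelSum (union_mem_modelSum hSx hSxi) hSΓ))
  rw [restr_eq_self_of_support_subset (hrΩ.trans hΩS), ← hv] at hmed_r
  have hxa : l1norm (x - a) ≤
      (1 - cH) * l1norm r + (2 + cH) * (ρ₀ * l1norm r + τ₀ * l1norm e) := by
    rw [show x - a = r - restr v Γ by rw [ha, hr]; abel]
    exact l1norm_sub_restr_head_le hcH0.le hrΩ
      ((l1norm_restr_mono _ (hΓSΓ.trans subset_union_right)).trans hmed_r)
      ((l1norm_restr_mono _ hΩS).trans hmed_r) (hhead _ (union_mem_modelSum hSxi hSx))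
  calc l1norm (x - xnext) ≤ (1 + cT) * l1norm (x - a) :=
        hxnext ▸ l1norm_sub_restr_tail_le (by linarith) hxSx (htail Sx hSx)
    _ ≤ (1 + cT) * ((1 - cH) * l1norm r + (2 + cH) * (ρ₀ * l1norm r + τ₀ * l1norm e)) := by
        gcongr
    _ = ρ * l1norm (x - xi) + τ * l1norm e := by rw [hρ, hτ, ← hr]; ring

theorem stmt5 {n m : ℕ}
    (M MT MH : Set (Set (Fin n)))
    (cH cT ρ₀ τ₀ : ℝ) (hcH0 : 0 < cH) (hcH1 : cH ≤ 1) (hcT : 1 ≤ cT)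
    (hρ₀ : 0 ≤ ρ₀) (hτ₀ : 0 ≤ τ₀)
    (A : Matrix (Fin m) (Fin n) ℝ)
    (med : (Fin m → ℝ) → (Fin n → ℝ))
    (hmed : ∀ (x' : Fin n → ℝ) (e' : Fin m → ℝ),
      ∀ S ∈ modelPlus (modelSum (modelSum M MT) MH),
        l1norm (restr (x' - med (A.mulVec (restr x' S) + e')) S) ≤
          ρ₀ * l1norm (restr x' S) + τ₀ * l1norm e')
    (x xi : Fin n → ℝ)
    (hx : Function.support x ∈ modelPlus M)
    (hxi : Function.support xi ∈ modelPlus MT)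
    (e : Fin m → ℝ)
    (r : Fin n → ℝ) (hr : r = x - xi)
    (v : Fin n → ℝ) (hv : v = med (A.mulVec r + e))
    (Γ : Set (Fin n)) (hΓ : Γ ∈ modelPlus MH)
    (hhead : ∀ Ω ∈ modelSum MT M, l1norm (restr v Γ) ≥ cH * l1norm (restr v Ω))
    (a : Fin n → ℝ) (ha : a = xi + restr v Γ)
    (Ω' : Set (Fin n)) (hΩ' : Ω' ∈ modelPlus MT)
    (htail : ∀ Ω ∈ M, l1norm (a - restr a Ω') ≤ cT * l1norm (a - restr a Ω))
    (xnext : Fin n → ℝ) (hxnext : xnext = restr a Ω')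
    (ρ τ : ℝ)
    (hρ : ρ = (1 + cT) * (2 * ρ₀ + 1 - cH * (1 - ρ₀)))
    (hτ : τ = (1 + cT) * (2 + cH) * τ₀) :
    l1norm (x - xnext) ≤ ρ * l1norm (x - xi) + τ * l1norm e :=
  stmt5_general M MT MH cH cT ρ₀ τ₀ hcH0 hcT A med hmed x xi hx hxi e r hr v hv Γ hΓ hhead a ha Ω'
    htail xnext hxnext ρ τ hρ hτ
end

section
/- Let 𝕄 be a structured sparsity model on {1,…,n}, let p ≥ 1 and 0 < c_H ≤ 1, let x ∈ ℝⁿ, let Γ ∈ 𝕄, let Ω' ⊆ {1,…,n}, and let Λ ⊆ {1,…,n} satisfy ‖(x_{Ω'ᶜ})_Λ‖_p ≥ c_H·‖(x_{Ω'ᶜ})_Ω‖_p for every Ω ∈ 𝕄 (where x_{Ω'ᶜ} denotes x with coordinates in Ω' set to zero). Then ‖x_Γ‖_p^p − ‖x_{Ω' ∪ Λ}‖_p^p ≤ (1 − c_H^p)·(‖x_Γ‖_p^p − ‖x_{Ω'}‖_p^p). -/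
/-! `A ↦ ‖x_A‖_p^p` is an additive, monotone set function, and the hypothesis at `Ω = Γ`, raised
to the power `p`, says that `Λ` captures at least a `c_H^p` fraction of the mass of `x` on `Γ \ Ω'`.
Hence `‖x_{Ω' ∪ Λ}‖_p^p = ‖x_{Ω'}‖_p^p + ‖x_{Λ \ Ω'}‖_p^p ≥ ‖x_{Ω'}‖_p^p + c_H^p ‖x_{Γ \ Ω'}‖_p^p`,
and `‖x_{Γ \ Ω'}‖_p^p ≥ ‖x_Γ‖_p^p - ‖x_{Ω'}‖_p^p`. -/

/-- The ℓ_p norm of a vector in ℝⁿ (for real `p ≥ 1`). -/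
noncomputable def lpnorm {k : ℕ} (p : ℝ) (x : Fin k → ℝ) : ℝ := (∑ i, |x i| ^ p) ^ (1 / p)

section LpMass

variable {k : ℕ} {p : ℝ}

lemma lpnorm_nonneg (x : Fin k → ℝ) : 0 ≤ lpnorm p x :=
  Real.rpow_nonneg (Finset.sum_nonneg fun _ _ => Real.rpow_nonneg (abs_nonneg _) p) _

lemma lpnorm_rpow (hp : p ≠ 0) (x : Fin k → ℝ) : lpnorm p x ^ p = ∑ i, |x i| ^ p := by
  rw [lpnorm, one_div,
    Real.rpow_inv_rpow (Finset.sum_nonneg fun _ _ => Real.rpow_nonneg (abs_nonneg _) p) hp]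

lemma restr_restr_compl (x : Fin k → ℝ) (A B : Set (Fin k)) :
    restr (restr x Bᶜ) A = restr x (A \ B) := by
  rw [restr, restr, Set.indicator_indicator, Set.sdiff_eq, restr]

lemma lpnorm_restr_rpow (hp : p ≠ 0) (x : Fin k → ℝ) (A : Set (Fin k)) :
    lpnorm p (restr x A) ^ p = ∑ i, A.indicator (fun i => |x i| ^ p) i := by
  rw [lpnorm_rpow hp]
  refine Finset.sum_congr rfl fun i _ => ?_
  by_cases hi : i ∈ A <;> simp [restr, hi, Real.zero_rpow hp]

lemma lpnorm_restr_union_rpow (hp : p ≠ 0) (x : Fin k → ℝ) {A B : Set (Fin k)}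
    (hAB : Disjoint A B) :
    lpnorm p (restr x (A ∪ B)) ^ p = lpnorm p (restr x A) ^ p + lpnorm p (restr x B) ^ p := by
  simp only [lpnorm_restr_rpow hp, Set.indicator_union_of_disjoint hAB, Finset.sum_add_distrib]

lemma lpnorm_restr_rpow_mono (hp : p ≠ 0) (x : Fin k → ℝ) {A B : Set (Fin k)} (hAB : A ⊆ B) :
    lpnorm p (restr x A) ^ p ≤ lpnorm p (restr x B) ^ p := by
  simp only [lpnorm_restr_rpow hp]
  exact Finset.sum_le_sum fun i _ =>
    Set.indicator_le_indicator_of_subset hAB (fun _ => Real.rpow_nonneg (abs_nonneg _) p) i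

lemma lpnorm_restr_rpow_le_add_diff (hp : p ≠ 0) (x : Fin k → ℝ) (A B : Set (Fin k)) :
    lpnorm p (restr x A) ^ p ≤ lpnorm p (restr x B) ^ p + lpnorm p (restr x (A \ B)) ^ p := by
  have hsplit := lpnorm_restr_union_rpow hp x (Set.disjoint_sdiff_inter (s := A) (t := B)).symm
  rw [Set.inter_union_sdiff] at hsplit
  linarith [lpnorm_restr_rpow_mono hp x (Set.inter_subset_right : A ∩ B ⊆ B)]

end LpMass

theorem stmt7_general {n : ℕ} (M : Set (Set (Fin n))) (p cH : ℝ) (hp : 1 ≤ p)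
    (hcH0 : 0 < cH)
    (x : Fin n → ℝ) (Γ : Set (Fin n)) (hΓ : Γ ∈ M)
    (Ω' Λ : Set (Fin n))
    (hΛ : ∀ Ω ∈ M,
      lpnorm p (restr (restr x Ω'ᶜ) Λ) ≥ cH * lpnorm p (restr (restr x Ω'ᶜ) Ω)) :
    lpnorm p (restr x Γ) ^ p - lpnorm p (restr x (Ω' ∪ Λ)) ^ p ≤
      (1 - cH ^ p) * (lpnorm p (restr x Γ) ^ p - lpnorm p (restr x Ω') ^ p) := by
  have hp0 : p ≠ 0 := by positivity
  have hgain : cH ^ p * lpnorm p (restr x (Γ \ Ω')) ^ p ≤ lpnorm p (restr x (Λ \ Ω')) ^ p := by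
    have h := hΛ Γ hΓ
    rw [restr_restr_compl, restr_restr_compl] at h
    rw [← Real.mul_rpow hcH0.le (lpnorm_nonneg _)]
    exact Real.rpow_le_rpow (mul_nonneg hcH0.le (lpnorm_nonneg _)) h (by positivity)
  have hunion : lpnorm p (restr x (Ω' ∪ Λ)) ^ p =
      lpnorm p (restr x Ω') ^ p + lpnorm p (restr x (Λ \ Ω')) ^ p := by
    rw [← lpnorm_restr_union_rpow hp0 x Set.disjoint_sdiff_right, Set.union_sdiff_self]
  have hΓsplit := lpnorm_restr_rpow_le_add_diff hp0 x Γ Ω'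
  rw [hunion]
  nlinarith [mul_nonneg (Real.rpow_nonneg hcH0.le p) (sub_nonneg.2 hΓsplit)]

theorem stmt7 {n : ℕ} (M : Set (Set (Fin n))) (p cH : ℝ) (hp : 1 ≤ p)
    (hcH0 : 0 < cH) (hcH1 : cH ≤ 1)
    (x : Fin n → ℝ) (Γ : Set (Fin n)) (hΓ : Γ ∈ M)
    (Ω' Λ : Set (Fin n))
    (hΛ : ∀ Ω ∈ M,
      lpnorm p (restr (restr x Ω'ᶜ) Λ) ≥ cH * lpnorm p (restr (restr x Ω'ᶜ) Ω)) :
    lpnorm p (restr x Γ) ^ p - lpnorm p (restr x (Ω' ∪ Λ)) ^ p ≤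
      (1 - cH ^ p) * (lpnorm p (restr x Γ) ^ p - lpnorm p (restr x Ω') ^ p) :=
  stmt7_general M p cH hp hcH0 x Γ hΓ Ω' Λ hΛ
end

section
/- Let X ∈ ℝ^{h×w} with X ≠ 0, let p ≥ 1, let k be a multiple of w with s = k/w ≤ h, and let B ∈ ℕ. Suppose supp(X) ∈ 𝕄⁺_{k,B}. Let x_min = min{|X_{ij}|^p : X_{ij} ≠ 0} and λ₀ = x_min/(2wh²). Suppose Ω is a support with exactly s entries in every column that minimizes ‖X − X_Γ‖_p^p + λ₀·EMD(Γ) over all supports Γ with exactly s entries in every column. Then ‖X − X_Ω‖_p = 0 and EMD(Ω) ≤ B (hence Ω ∈ 𝕄_{k,B}). -/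
/-- The Earth Mover's Distance between two finite sets of naturals of equal
cardinality: the minimum, over bijections `π` from `A` onto `B`, of
`∑ a ∈ A, |a - π a|`. -/
noncomputable def natEMD (A B : Finset ℕ) : ℕ :=
  sInf { d : ℕ | ∃ π : ℕ → ℕ, Set.BijOn π ↑A ↑B ∧
    d = ∑ a ∈ A, ((a : ℤ) - (π a : ℤ)).natAbs }

/-- The support of column `c` of a matrix support `Ω`: the set of rows `r`
with `(r, c) ∈ Ω`. -/
def colSupp {h w : ℕ} (Ω : Finset (Fin h × Fin w)) (c : ℕ) : Finset ℕ :=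
  (Ω.filter (fun q => (q.2 : ℕ) = c)).image (fun q => (q.1 : ℕ))

/-- The support-EMD of a matrix support `Ω` (with exactly `s` entries per
column): the sum of the EMDs of consecutive column supports. -/
noncomputable def suppEMD {h w : ℕ} (Ω : Finset (Fin h × Fin w)) : ℕ :=
  ∑ c ∈ Finset.range (w - 1), natEMD (colSupp Ω c) (colSupp Ω (c + 1))

/-- The Constrained EMD model `𝕄_{k,B}` with column sparsity `s = k/w` and
EMD budget `B`: supports in the `h × w` grid with exactly `s` entries per
column and support-EMD at most `B`. -/
noncomputable def cemdModel (h w s B : ℕ) : Set (Finset (Fin h × Fin w)) :=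
  { Ω | (∀ c < w, (colSupp Ω c).card = s) ∧ suppEMD Ω ≤ B }
/-- The entrywise ℓ_p norm of a matrix (for real `p ≥ 1`). -/
noncomputable def matLpNorm {h w : ℕ} (p : ℝ) (X : Matrix (Fin h) (Fin w) ℝ) : ℝ :=
  (∑ r, ∑ c, |X r c| ^ p) ^ (1 / p)

/-- `X_Ω`: the matrix `X` with all entries outside `Ω` set to zero. -/
def matRestrict {h w : ℕ} (X : Matrix (Fin h) (Fin w) ℝ)
    (Ω : Finset (Fin h × Fin w)) : Matrix (Fin h) (Fin w) ℝ :=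
  Matrix.of fun r c => if (r, c) ∈ Ω then X r c else 0

/-!
The support `Γ` promised by the model costs only `λ₀ · EMD(Γ)`, since `X_Γ = X`. Every
transport plan between two `s`-subsets of `{0, …, h-1}` moves each of at most `h` rows by less
than `h`, so `EMD(Γ) ≤ (w - 1) h² < 2 w h²` and this cost is below `x_min`. The minimizer `Ω`
costs no more, so its residual `‖X - X_Ω‖_p^p` is below `x_min`; as any entry of `X` missed by
`Ω` alone contributes at least `x_min`, the residual vanishes. Comparing the EMD terms then
gives `EMD(Ω) ≤ EMD(Γ) ≤ B`.
-/

open Finset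

lemma natEMD_le_card_mul {n : ℕ} {A B : Finset ℕ} (hA : A ⊆ range n) (hB : B ⊆ range n)
    (hcard : #A = #B) : natEMD A B ≤ #A * n := by
  obtain ⟨π, hπ⟩ := A.finite_toSet.exists_bijOn_of_encard_eq (t := (B : Set ℕ)) (by simp [hcard])
  calc natEMD A B ≤ ∑ a ∈ A, ((a : ℤ) - (π a : ℤ)).natAbs := Nat.sInf_le ⟨π, hπ, rfl⟩
    _ ≤ ∑ _a ∈ A, n := by
      refine sum_le_sum fun a ha => ?_
      have ha' := mem_range.1 (hA ha)
      have hπa := mem_range.1 (hB (hπ.mapsTo ha))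
      omega
    _ = #A * n := by rw [sum_const, smul_eq_mul]

lemma colSupp_subset_range {h w : ℕ} (Ω : Finset (Fin h × Fin w)) (c : ℕ) :
    colSupp Ω c ⊆ range h := by
  intro a ha
  obtain ⟨q, -, rfl⟩ := mem_image.1 ha
  exact mem_range.2 q.1.2

lemma suppEMD_le {h w s : ℕ} {Ω : Finset (Fin h × Fin w)}
    (hcol : ∀ c < w, #(colSupp Ω c) = s) : suppEMD Ω ≤ (w - 1) * (h * h) := by
  calc suppEMD Ω ≤ ∑ _c ∈ range (w - 1), h * h := by
        refine sum_le_sum fun c hc => ?_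
        have hc' := mem_range.1 hc
        calc natEMD (colSupp Ω c) (colSupp Ω (c + 1)) ≤ #(colSupp Ω c) * h :=
              natEMD_le_card_mul (colSupp_subset_range Ω c) (colSupp_subset_range Ω (c + 1))
                (by rw [hcol c (by omega), hcol (c + 1) (by omega)])
          _ ≤ h * h := by
              gcongr
              simpa using card_le_card (colSupp_subset_range Ω c)
    _ = (w - 1) * (h * h) := by rw [sum_const, card_range, smul_eq_mul]

section Matrix

variable {h w : ℕ} {p : ℝ}

lemma matLpNorm_rpow (hp : p ≠ 0) (Y : Matrix (Fin h) (Fin w) ℝ) :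
    matLpNorm p Y ^ p = ∑ r, ∑ c, |Y r c| ^ p := by
  rw [matLpNorm, ← Real.rpow_mul (by positivity), one_div_mul_cancel hp, Real.rpow_one]

lemma matLpNorm_zero (hp : p ≠ 0) : matLpNorm p (0 : Matrix (Fin h) (Fin w) ℝ) = 0 := by
  simp [matLpNorm, Real.zero_rpow hp, Real.zero_rpow (inv_ne_zero hp)]

lemma rpow_abs_le_matLpNorm_rpow (hp : p ≠ 0) (Y : Matrix (Fin h) (Fin w) ℝ) (r : Fin h)
    (c : Fin w) : |Y r c| ^ p ≤ matLpNorm p Y ^ p := by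
  rw [matLpNorm_rpow hp]
  calc |Y r c| ^ p ≤ ∑ c', |Y r c'| ^ p :=
        single_le_sum (f := fun c' => |Y r c'| ^ p) (fun _ _ => by positivity) (mem_univ c)
    _ ≤ ∑ r', ∑ c', |Y r' c'| ^ p :=
        single_le_sum (f := fun r' => ∑ c', |Y r' c'| ^ p) (fun _ _ => by positivity)
          (mem_univ r)

lemma sub_matRestrict_apply (X : Matrix (Fin h) (Fin w) ℝ) (Ω : Finset (Fin h × Fin w))
    (r : Fin h) (c : Fin w) :
    (X - matRestrict X Ω) r c = if (r, c) ∈ Ω then 0 else X r c := by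
  by_cases hrc : (r, c) ∈ Ω <;> simp [matRestrict, hrc]

lemma sub_matRestrict_eq_zero_iff {X : Matrix (Fin h) (Fin w) ℝ} {Ω : Finset (Fin h × Fin w)} :
    X - matRestrict X Ω = 0 ↔ ∀ r c, X r c ≠ 0 → (r, c) ∈ Ω := by
  refine ⟨fun hX r c hrc => ?_, fun hΩ => Matrix.ext fun r c => ?_⟩
  · by_contra hrcΩ
    have hentry := congrFun (congrFun hX r) c
    rw [sub_matRestrict_apply, if_neg hrcΩ] at hentry
    exact hrc hentry
  · rw [sub_matRestrict_apply, Matrix.zero_apply]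
    split_ifs with hrcΩ
    · rfl
    · exact not_not.1 fun hrc => hrcΩ (hΩ r c hrc)

lemma sub_matRestrict_eq_zero_of_lt (hp : p ≠ 0) {X : Matrix (Fin h) (Fin w) ℝ}
    {Ω : Finset (Fin h × Fin w)}
    (hlt : ∀ r c, X r c ≠ 0 → matLpNorm p (X - matRestrict X Ω) ^ p < |X r c| ^ p) :
    X - matRestrict X Ω = 0 := by
  refine sub_matRestrict_eq_zero_iff.2 fun r c hrc => ?_
  by_contra hrcΩ
  have hle := rpow_abs_le_matLpNorm_rpow hp (X - matRestrict X Ω) r c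
  rw [sub_matRestrict_apply, if_neg hrcΩ] at hle
  exact (hlt r c hrc).not_ge hle

def nonzeroEntryPowers (X : Matrix (Fin h) (Fin w) ℝ) (p : ℝ) : Set ℝ :=
  {v | ∃ r c, X r c ≠ 0 ∧ v = |X r c| ^ p}

lemma sInf_nonzeroEntryPowers_le (X : Matrix (Fin h) (Fin w) ℝ) {r : Fin h} {c : Fin w}
    (hrc : X r c ≠ 0) : sInf (nonzeroEntryPowers X p) ≤ |X r c| ^ p :=
  csInf_le ⟨0, by rintro _ ⟨_, _, _, rfl⟩; positivity⟩ ⟨r, c, hrc, rfl⟩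

lemma sInf_nonzeroEntryPowers_pos {X : Matrix (Fin h) (Fin w) ℝ} (hX : X ≠ 0) :
    0 < sInf (nonzeroEntryPowers X p) := by
  obtain ⟨r, hr⟩ := Function.ne_iff.1 hX
  obtain ⟨c, hrc⟩ := Function.ne_iff.1 hr
  have hfin : (nonzeroEntryPowers X p).Finite :=
    (Set.finite_range fun rc : Fin h × Fin w => |X rc.1 rc.2| ^ p).subset
      (by rintro _ ⟨r, c, _, rfl⟩; exact ⟨(r, c), rfl⟩)
  have hne : (nonzeroEntryPowers X p).Nonempty := ⟨_, r, c, hrc, rfl⟩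
  obtain ⟨r', c', hrc', hv⟩ := hne.csInf_mem hfin
  rw [hv]
  exact Real.rpow_pos_of_pos (abs_pos.2 hrc') p

end Matrix

theorem stmt12_general (h w s B : ℕ) (p : ℝ) (hp : 1 ≤ p)
    (X : Matrix (Fin h) (Fin w) ℝ) (hX : X ≠ 0)
    (hsupp : ∃ Γ ∈ cemdModel h w s B,
      {rc : Fin h × Fin w | X rc.1 rc.2 ≠ 0} ⊆ ↑Γ)
    (xmin : ℝ) (hxmin : xmin = sInf {v : ℝ | ∃ r c, X r c ≠ 0 ∧ v = |X r c| ^ p})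
    (lam : ℝ) (hlam : lam = xmin / (2 * w * h ^ 2))
    (Ω : Finset (Fin h × Fin w))
    (hmin : ∀ Γ : Finset (Fin h × Fin w), (∀ c < w, (colSupp Γ c).card = s) →
      matLpNorm p (X - matRestrict X Ω) ^ p + lam * suppEMD Ω ≤
        matLpNorm p (X - matRestrict X Γ) ^ p + lam * suppEMD Γ) :
    matLpNorm p (X - matRestrict X Ω) = 0 ∧ suppEMD Ω ≤ B := by
  obtain ⟨Γ, ⟨hΓcol, hΓB⟩, hΓX⟩ := hsupp
  have hp0 : p ≠ 0 := by positivity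
  obtain ⟨r, hr⟩ := Function.ne_iff.1 hX
  obtain ⟨c, -⟩ := Function.ne_iff.1 hr
  have hh := r.pos
  have hw := c.pos
  have hxmin_pos : 0 < xmin := hxmin ▸ sInf_nonzeroEntryPowers_pos hX
  have hlam_pos : 0 < lam := by rw [hlam]; positivity
  have hΓcost : lam * suppEMD Γ < xmin := by
    have hEMD : (suppEMD Γ : ℝ) < 2 * w * h ^ 2 := by
      have hlt : (w - 1) * (h * h) < 2 * w * h ^ 2 := by nlinarith [Nat.sub_le w 1]
      exact_mod_cast (suppEMD_le hΓcol).trans_lt hlt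
    calc lam * suppEMD Γ < lam * (2 * w * h ^ 2) := by gcongr
      _ = xmin := by rw [hlam]; field_simp
  have hcost := hmin Γ hΓcol
  rw [sub_matRestrict_eq_zero_iff.2 fun r c hrc => hΓX hrc, matLpNorm_zero hp0,
    Real.zero_rpow hp0, zero_add] at hcost
  have hres_nonneg : 0 ≤ matLpNorm p (X - matRestrict X Ω) ^ p := by
    rw [matLpNorm_rpow hp0]; positivity
  have hΩ : X - matRestrict X Ω = 0 := sub_matRestrict_eq_zero_of_lt hp0 fun r c hrc => by
    have hxmin_le := hxmin ▸ sInf_nonzeroEntryPowers_le (p := p) X hrc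
    have hΩcost_nonneg : 0 ≤ lam * suppEMD Ω := by positivity
    linarith
  refine ⟨by rw [hΩ, matLpNorm_zero hp0], ?_⟩
  have hEMD_le : (suppEMD Ω : ℝ) ≤ suppEMD Γ := le_of_mul_le_mul_left (by linarith) hlam_pos
  exact (Nat.cast_le.1 hEMD_le).trans hΓB

theorem stmt12 (h w s B k : ℕ) (p : ℝ) (hp : 1 ≤ p) (hk : k = s * w) (hs : s ≤ h)
    (X : Matrix (Fin h) (Fin w) ℝ) (hX : X ≠ 0)
    (hsupp : ∃ Γ ∈ cemdModel h w s B,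
      {rc : Fin h × Fin w | X rc.1 rc.2 ≠ 0} ⊆ ↑Γ)
    (xmin : ℝ) (hxmin : xmin = sInf {v : ℝ | ∃ r c, X r c ≠ 0 ∧ v = |X r c| ^ p})
    (lam : ℝ) (hlam : lam = xmin / (2 * w * h ^ 2))
    (Ω : Finset (Fin h × Fin w))
    (hcol : ∀ c < w, (colSupp Ω c).card = s)
    (hmin : ∀ Γ : Finset (Fin h × Fin w), (∀ c < w, (colSupp Γ c).card = s) →
      matLpNorm p (X - matRestrict X Ω) ^ p + lam * suppEMD Ω ≤
        matLpNorm p (X - matRestrict X Γ) ^ p + lam * suppEMD Γ) :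
    matLpNorm p (X - matRestrict X Ω) = 0 ∧ suppEMD Ω ≤ B :=
  stmt12_general h w s B p hp X hX hsupp xmin hxmin lam hlam Ω hmin
end
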